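/- On the open set {u₁ ≠ u₂} ⊂ ℝ⁴ define x₃ = ((p₁−p₂)/(u₁−u₂))² − u₁ − u₂ and y₃ = p₁ + ((p₁−p₂)/(u₁−u₂))·(x₃ − u₁). Then {x₃, y₃} = −1 identically with respect to the canonical Poisson bracket. -/

import Mathlib

/-- The canonical Poisson bracket on `ℝ⁴` with coordinates `(u₁,u₂,p₁,p₂)`. -/
noncomputable def poissonBracket (f g : ℝ → ℝ → ℝ → ℝ → ℝ) (u₁ u₂ p₁ p₂ : ℝ) : ℝ :=
    deriv (fun x => f x u₂ p₁ p₂) u₁ * deriv (fun y => g u₁ u₂ y p₂) p₁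
  + deriv (fun x => f u₁ x p₁ p₂) u₂ * deriv (fun y => g u₁ u₂ p₁ y) p₂
  - deriv (fun y => f u₁ u₂ y p₂) p₁ * deriv (fun x => g x u₂ p₁ p₂) u₁
  - deriv (fun y => f u₁ u₂ p₁ y) p₂ * deriv (fun x => g u₁ x p₁ p₂) u₂

/-- Abscissa of the third intersection point. -/
noncomputable def x₃Fun (x₁ x₂ y₁ y₂ : ℝ) : ℝ :=
  ((y₁ - y₂) / (x₁ - x₂)) ^ 2 - x₁ - x₂

/-- Ordinate of the third intersection point. -/
noncomputable def y₃Fun (x₁ x₂ y₁ y₂ : ℝ) : ℝ :=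
  y₁ + ((y₁ - y₂) / (x₁ - x₂)) * (x₃Fun x₁ x₂ y₁ y₂ - x₁)

/-!
Both coordinates are functions of the chord slope `s = (p₁ - p₂) / (u₁ - u₂)`, whose partial
derivatives in `(u₁, u₂, p₁, p₂)` are `(-s/d, s/d, 1/d, -1/d)` with `d = u₁ - u₂`.
Hence `{s, s} = 0` and `{u₁ + u₂, s} = 0`, so `{x₃, s} = 0` and, by the Leibniz rule,
`{x₃, y₃} = {x₃, p₁} - s {x₃, u₁} = (-2s²/d - 1) + 2s²/d = -1`.
-/

noncomputable def chordSlope (u₁ u₂ p₁ p₂ : ℝ) : ℝ :=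
  (p₁ - p₂) / (u₁ - u₂)

theorem x₃Fun_eq (u₁ u₂ p₁ p₂ : ℝ) :
    x₃Fun u₁ u₂ p₁ p₂ = chordSlope u₁ u₂ p₁ p₂ ^ 2 - u₁ - u₂ :=
  rfl

section Curve

variable {U₁ U₂ P₁ P₂ : ℝ → ℝ} {a b c e σ t : ℝ}

theorem HasDerivAt.chordSlope (hU₁ : HasDerivAt U₁ a t) (hU₂ : HasDerivAt U₂ b t)
    (hP₁ : HasDerivAt P₁ c t) (hP₂ : HasDerivAt P₂ e t) (h : U₁ t ≠ U₂ t) :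
    HasDerivAt (fun t => _root_.chordSlope (U₁ t) (U₂ t) (P₁ t) (P₂ t))
      ((c - e - _root_.chordSlope (U₁ t) (U₂ t) (P₁ t) (P₂ t) * (a - b)) / (U₁ t - U₂ t)) t := by
  have hd : U₁ t - U₂ t ≠ 0 := sub_ne_zero.mpr h
  refine ((hP₁.sub hP₂).div (hU₁.sub hU₂) hd).congr_deriv ?_
  simp only [_root_.chordSlope, Pi.sub_apply]
  field_simp

theorem HasDerivAt.x₃Fun (hU₁ : HasDerivAt U₁ a t) (hU₂ : HasDerivAt U₂ b t)
    (hs : HasDerivAt (fun t => _root_.chordSlope (U₁ t) (U₂ t) (P₁ t) (P₂ t)) σ t) :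
    HasDerivAt (fun t => _root_.x₃Fun (U₁ t) (U₂ t) (P₁ t) (P₂ t))
      (2 * _root_.chordSlope (U₁ t) (U₂ t) (P₁ t) (P₂ t) * σ - a - b) t := by
  simp only [x₃Fun_eq]
  refine (((hs.pow 2).sub hU₁).sub hU₂).congr_deriv ?_
  ring

theorem HasDerivAt.y₃Fun (hU₁ : HasDerivAt U₁ a t) (hU₂ : HasDerivAt U₂ b t)
    (hP₁ : HasDerivAt P₁ c t)
    (hs : HasDerivAt (fun t => _root_.chordSlope (U₁ t) (U₂ t) (P₁ t) (P₂ t)) σ t) :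
    HasDerivAt (fun t => _root_.y₃Fun (U₁ t) (U₂ t) (P₁ t) (P₂ t))
      (c + (σ * (_root_.x₃Fun (U₁ t) (U₂ t) (P₁ t) (P₂ t) - U₁ t) +
        _root_.chordSlope (U₁ t) (U₂ t) (P₁ t) (P₂ t) *
          (2 * _root_.chordSlope (U₁ t) (U₂ t) (P₁ t) (P₂ t) * σ - a - b - a))) t :=
  hP₁.add (hs.mul ((hU₁.x₃Fun hU₂ hs).sub hU₁))

end Curve

/-- The coordinates of the third intersection point are canonically conjugate:
`{x₃, y₃} = −1` identically on the open set `{u₁ ≠ u₂}`. -/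
theorem x₃_y₃_bracket (u₁ u₂ p₁ p₂ : ℝ) (h : u₁ ≠ u₂) :
    poissonBracket x₃Fun y₃Fun u₁ u₂ p₁ p₂ = -1 := by
  have k : ∀ {x : ℝ} (c : ℝ), HasDerivAt (fun _ => c) 0 x := fun c => hasDerivAt_const _ c
  have du₁ := hasDerivAt_id' u₁
  have du₂ := hasDerivAt_id' u₂
  have dp₁ := hasDerivAt_id' p₁
  have dp₂ := hasDerivAt_id' p₂
  have s₁ := du₁.chordSlope (k u₂) (k p₁) (k p₂) h
  have s₂ := (k u₁).chordSlope du₂ (k p₁) (k p₂) h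
  have s₃ := (k u₁).chordSlope (k u₂) dp₁ (k p₂) h
  have s₄ := (k u₁).chordSlope (k u₂) (k p₁) dp₂ h
  rw [poissonBracket,
    (du₁.x₃Fun (k _) s₁).deriv, (du₁.y₃Fun (k _) (k _) s₁).deriv,
    ((k _).x₃Fun du₂ s₂).deriv, ((k _).y₃Fun du₂ (k _) s₂).deriv,
    ((k _).x₃Fun (k _) s₃).deriv, ((k _).y₃Fun (k _) dp₁ s₃).deriv,
    ((k _).x₃Fun (k _) s₄).deriv, ((k _).y₃Fun (k _) (k _) s₄).deriv]
  have hd : u₁ - u₂ ≠ 0 := sub_ne_zero.mpr h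
  field_simp
  ring
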